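/- arXiv:1703.02459 — 3 statements merged into one kernel-verified Lean document; each statement's English description precedes it below -/
import Mathlib

section
/- Let T > 0 and let g : [0, T] → ℝ be a differentiable function with g(0) ≤ 0. If for every t ∈ [0, T] the implication (g(t) = 0 ⟹ g'(t) < 0) holds, then g(t) < 0 for every t ∈ (0, T]. -/
/-!
By the barrier principle for right derivatives, `g` can never cross `0` upwards, since at every
zero it is strictly decreasing; hence `g ≤ 0` on `[0, T]`. A zero `t > 0` would then be a maximum
of `g` on `[0, T]` approached from the left, forcing `g' t ≥ 0`, against `g' t < 0`.
-/

open Set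

theorem image_nonpos_of_deriv_neg_of_eq_zero {g g' : ℝ → ℝ} {a b : ℝ}
    (hg : ∀ x ∈ Icc a b, HasDerivWithinAt g (g' x) (Icc a b) x) (ha : g a ≤ 0)
    (hzero : ∀ x ∈ Ico a b, g x = 0 → g' x < 0) : ∀ ⦃x⦄, x ∈ Icc a b → g x ≤ 0 :=
  image_le_of_deriv_right_lt_deriv_boundary (B := 0) (B' := 0)
    (fun x hx ↦ (hg x hx).continuousWithinAt)
    (fun x hx ↦ (hg x (Ico_subset_Icc_self hx)).mono_of_mem_nhdsWithin (Icc_mem_nhdsGE_of_mem hx))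
    ha (fun _ ↦ hasDerivAt_const _ _) hzero

theorem IsLocalMaxOn.nonneg_of_hasDerivWithinAt_Icc {g : ℝ → ℝ} {g' a b x : ℝ}
    (hmax : IsLocalMaxOn g (Icc a b) x) (hx : x ∈ Ioc a b)
    (hg : HasDerivWithinAt g g' (Icc a b) x) : 0 ≤ g' := by
  have hleft : a - x ∈ posTangentConeAt (Icc a b) x :=
    sub_mem_posTangentConeAt_of_segment_subset <|
      (convex_Icc a b).segment_subset (Ioc_subset_Icc_self hx) (left_mem_Icc.2 (hx.1.le.trans hx.2))
  have h := hmax.hasFDerivWithinAt_nonpos hg.hasFDerivWithinAt hleft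
  simp only [ContinuousLinearMap.toSpanSingleton_apply, smul_eq_mul] at h
  nlinarith [hx.1]

theorem stmt0_general (T : ℝ) (g g' : ℝ → ℝ)
    (hderiv : ∀ t ∈ Set.Icc (0 : ℝ) T, HasDerivWithinAt g (g' t) (Set.Icc (0 : ℝ) T) t)
    (h0 : g 0 ≤ 0)
    (hneg : ∀ t ∈ Set.Icc (0 : ℝ) T, g t = 0 → g' t < 0) :
    ∀ t ∈ Set.Ioc (0 : ℝ) T, g t < 0 := by
  have hle : ∀ t ∈ Icc 0 T, g t ≤ 0 :=
    image_nonpos_of_deriv_neg_of_eq_zero hderiv h0 fun t ht ↦ hneg t (Ico_subset_Icc_self ht)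
  intro t ht
  have htIcc : t ∈ Icc 0 T := Ioc_subset_Icc_self ht
  refine (hle t htIcc).lt_of_ne fun hgt ↦ ?_
  have hmax : IsMaxOn g (Icc 0 T) t := fun y hy ↦ by simpa [hgt] using hle y hy
  exact (hneg t htIcc hgt).not_ge (hmax.localize.nonneg_of_hasDerivWithinAt_Icc ht (hderiv t htIcc))

/-- Let T > 0 and let g : [0, T] → ℝ be a differentiable function with g(0) ≤ 0.
If for every t ∈ [0, T] the implication (g(t) = 0 ⟹ g'(t) < 0) holds, then
g(t) < 0 for every t ∈ (0, T]. -/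
theorem stmt0 (T : ℝ) (hT : 0 < T) (g g' : ℝ → ℝ)
    (hderiv : ∀ t ∈ Set.Icc (0 : ℝ) T, HasDerivWithinAt g (g' t) (Set.Icc (0 : ℝ) T) t)
    (h0 : g 0 ≤ 0)
    (hneg : ∀ t ∈ Set.Icc (0 : ℝ) T, g t = 0 → g' t < 0) :
    ∀ t ∈ Set.Ioc (0 : ℝ) T, g t < 0 :=
  stmt0_general T g g' hderiv h0 hneg
end

section
/- Let n be a solution of the system on [0, ∞). If n_aB(0) < n_AB(0), then n_aB(t) ≤ n_AB(t) for all t ≥ 0. -/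
noncomputable section
namespace NB

open Real Set Filter

/-- A state of the six-dimensional system; coordinates 0..5 stand for
the genotypes aa, aA, AA, aB, AB, BB respectively. -/
abbrev State := Fin 6 → ℝ

/-- Σ3 = n_aa + n_aA + n_AA. -/
def S3 (n : State) : ℝ := n 0 + n 1 + n 2
/-- Σ5 = n_aA + n_AA + n_aB + n_AB + n_BB. -/
def S5 (n : State) : ℝ := n 1 + n 2 + n 3 + n 4 + n 5
/-- Σ6 = n_aa + n_aA + n_AA + n_aB + n_AB + n_BB. -/
def S6 (n : State) : ℝ := n 0 + n 1 + n 2 + n 3 + n 4 + n 5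

/-- Birth rates (with Lean's convention x/0 = 0). -/
def birth (f : ℝ) (n : State) : State :=
  ![ f * n 0 * (n 0 + n 1 / 2) / S3 n
      + f * (n 3 / 2) * (n 1 / 2 + n 3 / 2) / S5 n
      + f * (n 1 / 2) * (n 0 + n 1 / 2 + n 3 / 2) / S6 n,
    f * n 0 * (n 1 / 2 + n 2) / S3 n
      + f * ((n 1 / 2) * (n 3 / 2 + n 4 / 2) + (n 3 / 2) * (n 2 + n 4)) / S5 n
      + f * ((n 1 / 2 + n 2) * (n 0 + n 1 + n 3 / 2) + (n 1 / 4) * n 4) / S6 n,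
    f * (n 4 / 2) * (n 1 / 2 + n 2 + n 4 / 2) / S5 n
      + f * (n 1 / 2 + n 2) * (n 1 / 2 + n 2 + n 4 / 2) / S6 n,
    f * (n 1 / 2 + n 3) * (n 3 / 2 + n 4 / 2 + n 5) / S5 n
      + f * (n 1 / 2) * (n 3 / 2 + n 4 / 2 + n 5) / S6 n,
    f * (n 1 / 2 + n 2 + n 4) * (n 3 / 2 + n 4 / 2 + n 5) / S5 n
      + f * (n 1 / 2 + n 2) * (n 3 / 2 + n 4 / 2 + n 5) / S6 n,
    f * ((n 3 + n 4 + 2 * n 5) ^ 2 / 4) / S5 n ]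

/-- Death rates. -/
def death (D Δ c η : ℝ) (n : State) : State :=
  ![ n 0 * (D + Δ + c * S3 n),
    n 1 * (D + c * (n 0 + n 1 + n 2 + n 3 + n 4) + (c - η) * n 5),
    n 2 * (D + c * S6 n),
    n 3 * (D - Δ + c * S5 n),
    n 4 * (D - Δ + c * S5 n),
    n 5 * (D - Δ + (c - η) * n 1 + c * (n 2 + n 3 + n 4 + n 5)) ]

/-- The vector field F = b − d. -/
def F (f D Δ c η : ℝ) (n : State) : State :=
  fun i => birth f n i - death D Δ c η n i

/-- n̄_a = (f − D − Δ)/c. -/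
def nbar_a (f D Δ c : ℝ) : ℝ := (f - D - Δ) / c
/-- n̄_A = (f − D)/c. -/
def nbar_A (f D c : ℝ) : ℝ := (f - D) / c
/-- n̄_B = (f − D + Δ)/c. -/
def nbar_B (f D Δ c : ℝ) : ℝ := (f - D + Δ) / c

/-- p_A = (0,0,n̄_A,0,0,0). -/
def pA (f D c : ℝ) : State := ![0, 0, nbar_A f D c, 0, 0, 0]
/-- p_B = (0,0,0,0,0,n̄_B). -/
def pB (f D Δ c : ℝ) : State := ![0, 0, 0, 0, 0, nbar_B f D Δ c]
/-- p_aB = (n̄_a,0,0,0,0,n̄_B). -/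
def paB (f D Δ c : ℝ) : State := ![nbar_a f D Δ c, 0, 0, 0, 0, nbar_B f D Δ c]

/-- A solution of the system on a set I: a differentiable curve with
n'(t) = F(n(t)), nonnegative coordinates and Σ3 > 0, Σ5 > 0 on I. -/
def IsSolution (f D Δ c η : ℝ) (I : Set ℝ) (n : ℝ → State) : Prop :=
  ∀ t ∈ I,
    (∀ i, HasDerivAt (fun s => n s i) (F f D Δ c η (n t) i) t) ∧
    (∀ i, 0 ≤ n t i) ∧ 0 < S3 (n t) ∧ 0 < S5 (n t)

/-! The difference `g = n_AB - n_aB` satisfies a linear differential inequality `g' ≥ r g`: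
`n_aB` and `n_AB` have the same death rate and draw their B-gametes from the same pool, so they
share the per-capita rate `r`, while `n_AB` additionally receives a nonnegative inflow from
`AA` parents. Such an inequality preserves positivity: tilting by `exp (K t)` with `r + K > 0`
makes `g · exp (K t)` strictly increasing wherever it is positive, so it can never fall to half
its initial value. -/

theorem pos_of_mul_le_hasDerivAt {g g' r : ℝ → ℝ} {a b : ℝ}
    (hg : ∀ s ∈ Icc a b, HasDerivAt g (g' s) s) (hr : ContinuousOn r (Icc a b))
    (hle : ∀ s ∈ Icc a b, r s * g s ≤ g' s) (ha : 0 < g a) :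
    ∀ t ∈ Icc a b, 0 < g t := by
  obtain ⟨m, hm⟩ := isCompact_Icc.bddBelow_image hr
  set K := 1 - m
  set ψ : ℝ → ℝ := fun s => g s * Real.exp (K * s)
  have hψ : ∀ s ∈ Icc a b, HasDerivAt ψ ((g' s + K * g s) * Real.exp (K * s)) s := fun s hs => by
    have he : HasDerivAt (fun s => Real.exp (K * s)) (Real.exp (K * s) * K) s := by
      simpa using ((hasDerivAt_id s).const_mul K).exp
    exact ((hg s hs).mul he).congr_deriv (by ring)
  have hψa : 0 < ψ a := mul_pos ha (Real.exp_pos _)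
  have hfence : ∀ t ∈ Icc a b, ψ a / 2 ≤ ψ t :=
    image_le_of_deriv_right_lt_deriv_boundary' continuousOn_const
      (fun _ _ => hasDerivWithinAt_const _ _ _) (by linarith)
      (fun s hs => (hψ s hs).continuousAt.continuousWithinAt)
      (fun s hs => (hψ s (Ico_subset_Icc_self hs)).hasDerivWithinAt)
      (fun s hs heq => by
        have hs' := Ico_subset_Icc_self hs
        have hgs : 0 < g s := pos_of_mul_pos_left (heq ▸ half_pos hψa) (Real.exp_pos _).le
        have hrs : m ≤ r s := hm (mem_image_of_mem r hs')
        have := hle s hs'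
        have : 0 < g' s + K * g s := by nlinarith
        exact mul_pos this (Real.exp_pos _))
  intro t ht
  exact pos_of_mul_pos_left ((half_pos hψa).trans_le (hfence t ht)) (Real.exp_pos _).le

def sharedRate (f D Δ c : ℝ) (m : State) : ℝ :=
  f * (m 3 / 2 + m 4 / 2 + m 5) / S5 m - (D - Δ + c * S5 m)

lemma F_four_sub_F_three (f D Δ c η : ℝ) (m : State) (h5 : S5 m ≠ 0) (h6 : S6 m ≠ 0) :
    F f D Δ c η m 4 - F f D Δ c η m 3 =
      sharedRate f D Δ c m * (m 4 - m 3)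
        + f * m 2 * (m 3 / 2 + m 4 / 2 + m 5) * (1 / S5 m + 1 / S6 m) := by
  simp only [S5, S6] at h5 h6
  simp [F, birth, death, sharedRate, S5, S6]
  field_simp
  ring

lemma sharedRate_mul_le_F_sub {f : ℝ} (D Δ c η : ℝ) {m : State} (hf : 0 ≤ f)
    (hm : ∀ i, 0 ≤ m i) (h5 : 0 < S5 m) :
    sharedRate f D Δ c m * (m 4 - m 3) ≤ F f D Δ c η m 4 - F f D Δ c η m 3 := by
  have h6 : 0 < S6 m := by simp only [S5, S6] at *; linarith [hm 0]
  rw [F_four_sub_F_three f D Δ c η m h5.ne' h6.ne', le_add_iff_nonneg_right]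
  have := hm 3; have := hm 4; have := hm 5
  have hpool : 0 ≤ m 3 / 2 + m 4 / 2 + m 5 := by positivity
  exact mul_nonneg (mul_nonneg (mul_nonneg hf (hm 2)) hpool) (by positivity)

lemma continuousAt_sharedRate (f D Δ c : ℝ) {m : State} (h5 : S5 m ≠ 0) :
    ContinuousAt (sharedRate f D Δ c) m := by
  unfold sharedRate S5 at *
  fun_prop (disch := exact h5)

lemma IsSolution.continuousOn_sharedRate {f D Δ c η : ℝ} {I : Set ℝ} {n : ℝ → State}
    (hsol : IsSolution f D Δ c η I n) :
    ContinuousOn (fun t => sharedRate f D Δ c (n t)) I := fun t ht =>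
  ((continuousAt_sharedRate f D Δ c (hsol t ht).2.2.2.ne').comp
    (continuousAt_pi.2 fun i => ((hsol t ht).1 i).continuousAt)).continuousWithinAt

theorem stmt6_general (f D Δ c η : ℝ)
    (hΔ : 0 < Δ) (hΔD : Δ < D) (hDf : D < f)
    (n : ℝ → State) (hsol : IsSolution f D Δ c η (Set.Ici 0) n)
    (h0 : n 0 3 < n 0 4) :
    ∀ t : ℝ, 0 ≤ t → n t 3 ≤ n t 4 := by
  intro t ht
  have hf : 0 ≤ f := by linarith
  have hsol' := fun s (hs : s ∈ Icc 0 t) => hsol s hs.1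
  have hpos := pos_of_mul_le_hasDerivAt (g := fun s => n s 4 - n s 3)
    (fun s hs => ((hsol' s hs).1 4).sub ((hsol' s hs).1 3))
    (hsol.continuousOn_sharedRate.mono Icc_subset_Ici_self)
    (fun s hs => sharedRate_mul_le_F_sub D Δ c η hf (hsol' s hs).2.1 (hsol' s hs).2.2.2)
    (sub_pos.2 h0) t ⟨ht, le_rfl⟩
  exact (sub_pos.1 hpos).le

/-- If n_aB(0) < n_AB(0) then n_aB(t) ≤ n_AB(t) for all t ≥ 0. -/
theorem stmt6 (f D Δ c η : ℝ)
    (hΔ : 0 < Δ) (hΔD : Δ < D) (hDf : D < f) (hc : 0 < c)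
    (hη0 : 0 ≤ η) (hηc : η < c)
    (n : ℝ → State) (hsol : IsSolution f D Δ c η (Set.Ici 0) n)
    (h0 : n 0 3 < n 0 4) :
    ∀ t : ℝ, 0 ≤ t → n t 3 ≤ n t 4 :=
  stmt6_general f D Δ c η hΔ hΔD hDf n hsol h0

end NB
end
end

section
/- Assume moreover c < f − D. There exists ε₀* > 0 (depending only on f, D, Δ, c, η, K₀) such that for all 0 < ε₀ < ε₀* and all 0 < ε < ε₀, in the Phase‑1 setting one has n_BB(t) ≤ n_AB(t)² for all t ∈ [0, T₁]. -/
noncomputable section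
namespace NB

open Real Set Filter

/-- The set of times at which the total B/aA/aa perturbation has reached level ε₀. -/
def hitSet (ε₀ : ℝ) (n : ℝ → State) : Set ℝ :=
  {t : ℝ | 0 ≤ t ∧ ε₀ ≤ n t 0 + n t 1 + n t 3 + n t 4 + n t 5}

/-- T₁ = inf{t ≥ 0 : n_aa + n_aA + n_aB + n_AB + n_BB ≥ ε₀}. -/
def T1 (ε₀ : ℝ) (n : ℝ → State) : ℝ := sInf (hitSet ε₀ n)

/-- Phase‑1 initial condition: n_aA(0) = ε, k₁·ε² ≤ n_aa(0) ≤ ε²,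
n̄_A − C₀·ε ≤ n_AA(0) ≤ n̄_A, n_AB(0) = ε³, n_aB(0) = 0, n_BB(0) = 0. -/
def Phase1Init (f D c : ℝ) (k₁ C₀ ε : ℝ) (n : ℝ → State) : Prop :=
  n 0 1 = ε ∧ k₁ * ε ^ 2 ≤ n 0 0 ∧ n 0 0 ≤ ε ^ 2 ∧
  nbar_A f D c - C₀ * ε ≤ n 0 2 ∧ n 0 2 ≤ nbar_A f D c ∧
  n 0 4 = ε ^ 3 ∧ n 0 3 = 0 ∧ n 0 5 = 0


/-! Near `p_A` the heterozygotes `n_aB` and `n_AB` are born from matings with the resident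
`AA` population, so `n_AB` grows at a rate close to `f − (D − Δ) − c n̄_A = Δ`, while `n_BB`
is produced at rate about `(f / n̄_A) n_AB²` and dies at rate about `D − Δ + c n̄_A`.
Along `n_BB = n_AB²` the quantity `n_AB² − n_BB` therefore grows at the positive rate
`n_AB² (Δ + f − f / n̄_A)` (here `n̄_A > 1`), up to errors of order `ε₀`, and a first-touch
argument keeps the solution below the parabola. The bound
`(n_aB + n_AB + 2 n_BB)² ≤ 4 n_AB² (1 + ε₀)²` used for the birth rate of `BB` needs
`n_aB ≤ n_AB`, which is itself preserved because `(n_AB − n_aB)' > 0` wherever `n_aB = n_AB`. -/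

open Topology

section Barrier

variable {a b : ℝ} {u v u' v' : ℝ → ℝ}

theorem le_of_deriv_lt_where_eq (hu : ∀ t ∈ Icc a b, HasDerivAt u (u' t) t)
    (hv : ∀ t ∈ Icc a b, HasDerivAt v (v' t) t) (ha : u a ≤ v a)
    (htouch : ∀ t ∈ Ico a b, u t = v t → u' t < v' t) : ∀ t ∈ Icc a b, u t ≤ v t :=
  image_le_of_deriv_right_lt_deriv_boundary'
    (fun t ht => (hu t ht).continuousAt.continuousWithinAt)
    (fun t ht => (hu t (Ico_subset_Icc_self ht)).hasDerivWithinAt) ha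
    (fun t ht => (hv t ht).continuousAt.continuousWithinAt)
    (fun t ht => (hv t (Ico_subset_Icc_self ht)).hasDerivWithinAt) htouch

/-- A Grönwall-type lower bound: `u` stays above `u a * exp ((r - 1) (t - a))`. -/
theorem pos_of_mul_le_deriv {r : ℝ} (hu : ∀ t ∈ Icc a b, HasDerivAt u (u' t) t) (ha : 0 < u a)
    (hbound : ∀ t ∈ Ico a b, u t * r ≤ u' t) : ∀ t ∈ Icc a b, 0 < u t := by
  set w : ℝ → ℝ := fun t => u a * Real.exp ((r - 1) * (t - a))
  have hw_pos : ∀ t, 0 < w t := fun t => by positivity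
  have hw : ∀ t ∈ Icc a b, HasDerivAt w ((r - 1) * w t) t := fun t _ => by
    have := (((hasDerivAt_id t).sub_const a).const_mul (r - 1)).exp.const_mul (u a)
    exact this.congr_deriv (by simp only [w, id]; ring)
  have hwu := le_of_deriv_lt_where_eq hw hu (by simp [w]) fun t ht hwt => by
    have := hw_pos t
    rw [hwt] at this ⊢
    linarith [hbound t ht]
  exact fun t ht => (hw_pos t).trans_le (hwu t ht)

end Barrier

theorem F_apply_three (f D Δ c η : ℝ) (m : State) :
    F f D Δ c η m 3 =
      f * (m 1 / 2 + m 3) * (m 3 / 2 + m 4 / 2 + m 5) / S5 m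
      + f * (m 1 / 2) * (m 3 / 2 + m 4 / 2 + m 5) / S6 m
      - m 3 * (D - Δ + c * S5 m) := rfl

theorem F_apply_four (f D Δ c η : ℝ) (m : State) :
    F f D Δ c η m 4 =
      f * (m 1 / 2 + m 2 + m 4) * (m 3 / 2 + m 4 / 2 + m 5) / S5 m
      + f * (m 1 / 2 + m 2) * (m 3 / 2 + m 4 / 2 + m 5) / S6 m
      - m 4 * (D - Δ + c * S5 m) := rfl

theorem F_apply_five (f D Δ c η : ℝ) (m : State) :
    F f D Δ c η m 5 =
      f * ((m 3 + m 4 + 2 * m 5) ^ 2 / 4) / S5 m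
      - m 5 * (D - Δ + (c - η) * m 1 + c * (m 2 + m 3 + m 4 + m 5)) := rfl

theorem F_three_lt_F_four {f D Δ c η : ℝ} {m : State} (hf : 0 < f) (hm : ∀ i, 0 ≤ m i)
    (hm2 : 0 < m 2) (hm4 : 0 < m 4) (h34 : m 3 = m 4) :
    F f D Δ c η m 3 < F f D Δ c η m 4 := by
  have hS5 : 0 < S5 m := by simp only [S5]; linarith [hm 1, hm 3, hm 5]
  have hS6 : 0 < S6 m := by simp only [S6]; linarith [hm 0, hm 1, hm 3, hm 5]
  have hpos : 0 < m 4 / 2 + m 4 / 2 + m 5 := by linarith [hm 5]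
  have : F f D Δ c η m 4 - F f D Δ c η m 3
      = f * m 2 * (m 4 / 2 + m 4 / 2 + m 5) / S5 m
        + f * m 2 * (m 4 / 2 + m 4 / 2 + m 5) / S6 m := by
    rw [F_apply_four, F_apply_three, h34]; ring
  have : 0 < F f D Δ c η m 4 - F f D Δ c η m 3 := by rw [this]; positivity
  linarith

/-- The region that a Phase-1 solution stays in before `T₁`, with `a = n̄_A`, `K = K₀`,
`x = ε₀`. -/
structure NearPA (a K x : ℝ) (m : State) : Prop where
  nonneg : ∀ i, 0 ≤ m i
  perturbation_le : m 0 + m 1 + m 3 + m 4 + m 5 ≤ x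
  abs_sub_le : |m 2 - a| ≤ K * x

namespace NearPA

variable {a K x : ℝ} {m : State}

theorem sub_le_two (hm : NearPA a K x m) : a - K * x ≤ m 2 := by
  linarith [(abs_le.1 hm.abs_sub_le).1]

theorem four_le (hm : NearPA a K x m) : m 4 ≤ x := by
  have := hm.nonneg
  linarith [this 0, this 1, this 3, this 5, hm.perturbation_le]

theorem sub_le_S5 (hm : NearPA a K x m) : a - K * x ≤ S5 m := by
  simp only [S5]
  have := hm.nonneg
  linarith [this 1, this 3, this 4, this 5, hm.sub_le_two]

theorem S5_le_S6 (hm : NearPA a K x m) : S5 m ≤ S6 m := by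
  simp only [S5, S6]
  linarith [hm.nonneg 0]

theorem S6_le (hm : NearPA a K x m) : S6 m ≤ a + (K + 1) * x := by
  simp only [S6]
  linarith [(abs_le.1 hm.abs_sub_le).2, hm.perturbation_le]

end NearPA

def abRateLower (f D Δ c a K x : ℝ) : ℝ :=
  f * (a - K * x) / (a + (K + 1) * x) - (D - Δ) - c * (a + (K + 1) * x)

def bbRateUpper (f D Δ c a K x : ℝ) : ℝ :=
  f * (1 + x) ^ 2 / (a - K * x) - (D - Δ) - c * (a - K * x)

section Rates

variable {f D Δ c η a K x : ℝ} {m : State}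

theorem NearPA.mul_abRateLower_le_F_four (hf : 0 ≤ f) (hc : 0 ≤ c) (hm : NearPA a K x m)
    (hax : 0 < a - K * x) : m 4 * abRateLower f D Δ c a K x ≤ F f D Δ c η m 4 := by
  have hn := hm.nonneg
  have h1 := hn 1; have h2 := hn 2; have h3 := hn 3; have h4 := hn 4; have h5 := hn 5
  have hS5 : 0 < S5 m := hax.trans_le hm.sub_le_S5
  have hS6 : 0 < S6 m := hS5.trans_le hm.S5_le_S6
  have hS5le := hm.S5_le_S6.trans hm.S6_le
  have hm2 := hm.sub_le_two
  have birth_S5 : f * (a - K * x) * (m 4 / 2) / (a + (K + 1) * x)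
      ≤ f * (m 1 / 2 + m 2 + m 4) * (m 3 / 2 + m 4 / 2 + m 5) / S5 m := by
    gcongr <;> linarith
  have birth_S6 : f * (a - K * x) * (m 4 / 2) / (a + (K + 1) * x)
      ≤ f * (m 1 / 2 + m 2) * (m 3 / 2 + m 4 / 2 + m 5) / S6 m := by
    gcongr <;> linarith [hm.S6_le]
  have death : m 4 * (D - Δ + c * S5 m) ≤ m 4 * (D - Δ + c * (a + (K + 1) * x)) := by
    gcongr
  have : m 4 * abRateLower f D Δ c a K x
      = 2 * (f * (a - K * x) * (m 4 / 2) / (a + (K + 1) * x))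
        - m 4 * (D - Δ + c * (a + (K + 1) * x)) := by
    simp only [abRateLower]; ring
  rw [F_apply_four, this]
  linarith

theorem NearPA.F_five_le_mul_bbRateUpper (hf : 0 ≤ f) (hc : 0 ≤ c) (hηc : η ≤ c)
    (hm : NearPA a K x m) (hax : 0 < a - K * x) (h34 : m 3 ≤ m 4) (h5 : m 5 = m 4 ^ 2) :
    F f D Δ c η m 5 ≤ m 4 ^ 2 * bbRateUpper f D Δ c a K x := by
  have hn := hm.nonneg
  have h1 := hn 1; have h3 := hn 3; have h4 := hn 4
  have hS5 := hm.sub_le_S5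
  have hm2 := hm.sub_le_two
  have hsum : m 3 + m 4 + 2 * m 5 ≤ 2 * m 4 * (1 + x) := by
    nlinarith [hm.four_le]
  have hsq : (m 3 + m 4 + 2 * m 5) ^ 2 / 4 ≤ m 4 ^ 2 * (1 + x) ^ 2 := by
    have := pow_le_pow_left₀ (by linarith [hn 5]) hsum 2
    linarith
  have birth : f * ((m 3 + m 4 + 2 * m 5) ^ 2 / 4) / S5 m
      ≤ f * (m 4 ^ 2 * (1 + x) ^ 2) / (a - K * x) := by
    gcongr
  have death : m 4 ^ 2 * (D - Δ + c * (a - K * x))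
      ≤ m 5 * (D - Δ + (c - η) * m 1 + c * (m 2 + m 3 + m 4 + m 5)) := by
    rw [h5]
    refine mul_le_mul_of_nonneg_left ?_ (sq_nonneg _)
    nlinarith [mul_nonneg (sub_nonneg.2 hηc) h1, sq_nonneg (m 4)]
  have : m 4 ^ 2 * bbRateUpper f D Δ c a K x
      = f * (m 4 ^ 2 * (1 + x) ^ 2) / (a - K * x) - m 4 ^ 2 * (D - Δ + c * (a - K * x)) := by
    simp only [bbRateUpper]; ring
  rw [F_apply_five, this]
  linarith

theorem NearPA.F_five_lt_two_mul_F_four (hf : 0 ≤ f) (hc : 0 ≤ c) (hηc : η ≤ c)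
    (hm : NearPA a K x m) (hax : 0 < a - K * x)
    (hrate : bbRateUpper f D Δ c a K x < 2 * abRateLower f D Δ c a K x)
    (h34 : m 3 ≤ m 4) (hm4 : 0 < m 4) (h5 : m 5 = m 4 ^ 2) :
    F f D Δ c η m 5 < 2 * m 4 * F f D Δ c η m 4 :=
  calc F f D Δ c η m 5 ≤ m 4 ^ 2 * bbRateUpper f D Δ c a K x :=
        hm.F_five_le_mul_bbRateUpper hf hc hηc hax h34 h5
    _ < m 4 ^ 2 * (2 * abRateLower f D Δ c a K x) := by gcongr
    _ = 2 * m 4 * (m 4 * abRateLower f D Δ c a K x) := by ring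
    _ ≤ 2 * m 4 * F f D Δ c η m 4 := by
        gcongr
        exact hm.mul_abRateLower_le_F_four hf hc hax

end Rates

theorem eventually_bbRateUpper_lt {f D Δ c a K : ℝ} (ha : 0 < a)
    (h0 : bbRateUpper f D Δ c a K 0 < 2 * abRateLower f D Δ c a K 0) :
    ∀ᶠ x in 𝓝 0, 0 < a - K * x ∧ bbRateUpper f D Δ c a K x < 2 * abRateLower f D Δ c a K x := by
  have hbb : ContinuousAt (bbRateUpper f D Δ c a K) 0 := by
    unfold bbRateUpper
    fun_prop (disch := simpa using ha.ne')
  have hab : ContinuousAt (abRateLower f D Δ c a K) 0 := by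
    unfold abRateLower
    fun_prop (disch := simpa using ha.ne')
  refine (ContinuousAt.eventually_lt (f := fun _ => 0) (by fun_prop) (by fun_prop) ?_).and
    (hbb.eventually_lt (hab.const_mul 2) h0)
  simpa using ha

theorem bbRateUpper_zero_lt {f D Δ c K : ℝ} (hΔ : 0 < Δ) (hΔD : Δ < D) (hc : 0 < c)
    (hcfD : c < f - D) :
    bbRateUpper f D Δ c (nbar_A f D c) K 0 < 2 * abRateLower f D Δ c (nbar_A f D c) K 0 := by
  have ha : 1 < nbar_A f D c := (one_lt_div hc).2 hcfD
  have hca : c * nbar_A f D c = f - D := by unfold nbar_A; field_simp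
  have hf : 0 < f := by linarith
  have : f / nbar_A f D c < f := div_lt_self hf ha
  have ha0 : nbar_A f D c ≠ 0 := by positivity
  simp only [bbRateUpper, abRateLower, mul_zero, sub_zero, add_zero, one_pow, mul_one,
    mul_div_assoc, div_self ha0]
  linarith

theorem perturbation_lt_of_lt_T1 {ε₀ t : ℝ} {n : ℝ → State} (ht : 0 ≤ t) (htT : t < T1 ε₀ n) :
    n t 0 + n t 1 + n t 3 + n t 4 + n t 5 < ε₀ := by
  by_contra! h
  exact htT.not_ge (csInf_le ⟨0, fun _ hs => hs.1⟩ ⟨ht, h⟩)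

theorem stmt9_general (f D Δ c η K₀ : ℝ)
    (hΔ : 0 < Δ) (hΔD : Δ < D) (hc : 0 < c)
    (hηc : η < c) (hcfD : c < f - D) :
    ∃ ε₀star > (0 : ℝ), ∀ ε₀ : ℝ, 0 < ε₀ → ε₀ < ε₀star →
      ∀ ε : ℝ, 0 < ε → ε < ε₀ →
      ∀ k₁ C₀ : ℝ, 0 < k₁ → 0 < C₀ →
      ∀ n : ℝ → State, IsSolution f D Δ c η (Set.Ici 0) n →
        Phase1Init f D c k₁ C₀ ε n →
        (∀ t ∈ Set.Icc (0 : ℝ) (T1 ε₀ n), |n t 2 - nbar_A f D c| ≤ K₀ * ε₀) →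
        ∀ t ∈ Set.Icc (0 : ℝ) (T1 ε₀ n), n t 5 ≤ (n t 4) ^ 2 := by
  have hf : 0 < f := by linarith
  have ha : 0 < nbar_A f D c := div_pos (by linarith) hc
  obtain ⟨l, δ, ⟨hl, hδ⟩, hsmall⟩ := (eventually_bbRateUpper_lt (K := K₀) ha
    (bbRateUpper_zero_lt hΔ hΔD hc hcfD)).exists_Ioo_subset
  refine ⟨δ, hδ, fun ε₀ hε₀ hε₀δ ε hε _ k₁ C₀ _ _ n hsol hinit hK => ?_⟩
  obtain ⟨hax, hrate⟩ := hsmall ⟨hl.trans hε₀, hε₀δ⟩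
  obtain ⟨-, -, -, -, -, h4, h3, h5⟩ := hinit
  have hderiv : ∀ i, ∀ t ∈ Icc 0 (T1 ε₀ n),
      HasDerivAt (fun s => n s i) (F f D Δ c η (n t) i) t := fun i t ht => (hsol t ht.1).1 i
  have hnear : ∀ t ∈ Ico 0 (T1 ε₀ n), NearPA (nbar_A f D c) K₀ ε₀ (n t) := fun t ht =>
    ⟨(hsol t ht.1).2.1, (perturbation_lt_of_lt_T1 ht.1 ht.2).le, hK t (Ico_subset_Icc_self ht)⟩
  have hAB : ∀ t ∈ Icc 0 (T1 ε₀ n), 0 < n t 4 :=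
    pos_of_mul_le_deriv (hderiv 4) (by rw [h4]; positivity) fun t ht =>
      (hnear t ht).mul_abRateLower_le_F_four hf.le hc.le hax
  have haB : ∀ t ∈ Icc 0 (T1 ε₀ n), n t 3 ≤ n t 4 :=
    le_of_deriv_lt_where_eq (hderiv 3) (hderiv 4) (by rw [h3, h4]; positivity) fun t ht h34 =>
      F_three_lt_F_four hf (hnear t ht).nonneg (hax.trans_le (hnear t ht).sub_le_two)
        (hAB t (Ico_subset_Icc_self ht)) h34
  refine le_of_deriv_lt_where_eq (hderiv 5) (v' := fun t => 2 * n t 4 * F f D Δ c η (n t) 4)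
    (fun t ht => ((hderiv 4 t ht).pow 2).congr_deriv (by ring)) (by rw [h5]; positivity)
    fun t ht h54 => (hnear t ht).F_five_lt_two_mul_F_four hf.le hc.le hηc.le hax hrate
      (haB t (Ico_subset_Icc_self ht)) (hAB t (Ico_subset_Icc_self ht)) h54

/-- In the Phase‑1 setting, for ε₀ small enough: n_BB ≤ n_AB² on [0, T₁]. -/
theorem stmt9 (f D Δ c η K₀ : ℝ)
    (hΔ : 0 < Δ) (hΔD : Δ < D) (hDf : D < f) (hc : 0 < c)
    (hη0 : 0 ≤ η) (hηc : η < c) (hcfD : c < f - D) (hK₀ : 0 < K₀) :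
    ∃ ε₀star > (0 : ℝ), ∀ ε₀ : ℝ, 0 < ε₀ → ε₀ < ε₀star →
      ∀ ε : ℝ, 0 < ε → ε < ε₀ →
      ∀ k₁ C₀ : ℝ, 0 < k₁ → 0 < C₀ →
      ∀ n : ℝ → State, IsSolution f D Δ c η (Set.Ici 0) n →
        Phase1Init f D c k₁ C₀ ε n →
        (∀ t ∈ Set.Icc (0 : ℝ) (T1 ε₀ n), |n t 2 - nbar_A f D c| ≤ K₀ * ε₀) →
        ∀ t ∈ Set.Icc (0 : ℝ) (T1 ε₀ n), n t 5 ≤ (n t 4) ^ 2 :=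
  stmt9_general f D Δ c η K₀ hΔ hΔD hc hηc hcfD

end NB
end
end
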